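/- arXiv:1102.5452 — 3 statements merged into one kernel-verified Lean document; each statement's English description precedes it below -/
import Mathlib

section
/- Let A and B be non-empty sets over a complete residuated lattice 𝓛, let φ:A×B→L be a uniform fuzzy relation, let E=E_A^φ and F=E_B^φ, and define φ̃:A/E→B/F by φ̃(E_a)=F_{ψ(a)} for any a∈A and ψ∈CR(φ). Then φ̃ is well defined (its value does not depend on the choice of ψ∈CR(φ) nor on the representative a of the class E_a), φ̃ is a bijection of A/E onto B/F, and (φ̃)⁻¹ = (φ⁻¹)~, the map B/F→A/E defined analogously from the uniform fuzzy relation φ⁻¹. -/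
universe u

/-- A complete residuated lattice: a complete lattice with a commutative monoid
structure whose unit is the top element, together with a residuum operation
forming an adjoint pair with the multiplication. -/
class CompleteResiduatedLattice (L : Type*) extends CompleteLattice L, CommMonoid L where
  /-- the residuum operation `→` -/
  res : L → L → L
  /-- the adjunction property -/
  adjunction : ∀ x y z : L, x * y ≤ z ↔ x ≤ res y z
  /-- the multiplicative unit `1` is the greatest element -/
  one_eq_top : (1 : L) = ⊤

namespace FuzzyAutomataBisim

/-- A fuzzy automaton over `L` and alphabet `X`, with state set `A`. -/
structure FuzzyAutomaton (L : Type*) [CompleteResiduatedLattice L] (X A : Type*) where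
  δ : A → X → A → L
  σ : A → L
  τ : A → L

variable {L X A B C : Type*} [CompleteResiduatedLattice L]

/-- biresiduum `x ↔ y = (x → y) ⊓ (y → x)` -/
def bires (x y : L) : L :=
  CompleteResiduatedLattice.res x y ⊓ CompleteResiduatedLattice.res y x

/-- inverse of a fuzzy relation -/
def inv (φ : A → B → L) : B → A → L := fun b a => φ a b

/-- composition of fuzzy relations -/
def rcomp (φ : A → B → L) (ψ : B → C → L) : A → C → L := fun a c => ⨆ b, φ a b * ψ b c

/-- composition of a fuzzy set with a fuzzy relation -/
def scomp (f : A → L) (φ : A → B → L) : B → L := fun b => ⨆ a, f a * φ a b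

/-- composition of a fuzzy relation with a fuzzy set -/
def rscomp (φ : A → B → L) (g : B → L) : A → L := fun a => ⨆ b, φ a b * g b

/-- degree of overlapping of two fuzzy sets -/
def sdot (f g : A → L) : L := ⨆ a, f a * g a

/-- kernel `E_A^φ` of a fuzzy relation -/
def ker (φ : A → B → L) : A → A → L := fun a₁ a₂ => ⨅ b, bires (φ a₁ b) (φ a₂ b)

/-- co-kernel `E_B^φ` of a fuzzy relation -/
def coker (φ : A → B → L) : B → B → L := fun b₁ b₂ => ⨅ a, bires (φ a b₁) (φ a b₂)

/-- `φ` is an `L`-function -/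
def IsLFun (φ : A → B → L) : Prop := ∀ a, ∃ b, φ a b = 1

/-- `φ` is surjective, i.e. `φ⁻¹` is an `L`-function -/
def IsSurj (φ : A → B → L) : Prop := ∀ b, ∃ a, φ a b = 1

/-- `φ` is a partial fuzzy function: `φ ∘ φ⁻¹ ∘ φ ≤ φ` -/
def IsPFF (φ : A → B → L) : Prop := rcomp (rcomp φ (inv φ)) φ ≤ φ

/-- `φ` is a uniform fuzzy relation: a partial fuzzy function that is a
surjective `L`-function -/
def IsUniform (φ : A → B → L) : Prop := IsPFF φ ∧ IsLFun φ ∧ IsSurj φ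

/-- the set of crisp descriptions of `φ` -/
def CR (φ : A → B → L) : Set (A → B) := {ψ | ∀ a, φ a (ψ a) = 1}

/-- `ψ : A → B` is `F`-surjective -/
def SurjMod (F : B → B → L) (ψ : A → B) : Prop := ∀ b, ∃ a, F (ψ a) b = 1

/-- fuzzy equivalence relation -/
structure IsFuzzyEquiv (E : A → A → L) : Prop where
  refl : ∀ a, E a a = 1
  symm : ∀ a b, E a b = E b a
  trans : ∀ a b c, E a b * E b c ≤ E a c

/-- fuzzy equality -/
def IsFuzzyEquality (E : A → A → L) : Prop :=
  IsFuzzyEquiv E ∧ ∀ a b, E a b = 1 → a = b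

/-- the factor set `A/E = {E_a : a ∈ A}` -/
abbrev FactorSet (E : A → A → L) := {f : A → L // ∃ a, E a = f}

/-- the class `E_a` as an element of `A/E` -/
def toClass (E : A → A → L) (a : A) : FactorSet E := ⟨E a, a, rfl⟩

/-- a chosen representative of a class -/
noncomputable def rep {E : A → A → L} (c : FactorSet E) : A := c.2.choose

/-- the fuzzy relation `Ẽ` on `A/E` -/
noncomputable def tildeRel (E : A → A → L) : FactorSet E → FactorSet E → L :=
  fun c c' => E (rep c) (rep c')

open Classical in
/-- a chosen crisp description of `φ` -/
noncomputable def crispDesc [Nonempty B] (φ : A → B → L) : A → B :=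
  fun a => if h : ∃ b, φ a b = 1 then h.choose else Classical.arbitrary B

/-- the induced map `φ̃ : A/E_A^φ → B/E_B^φ`, `φ̃(E_a) = F_{ψ(a)}` -/
noncomputable def tilde [Nonempty B] (φ : A → B → L) :
    FactorSet (ker φ) → FactorSet (coker φ) :=
  fun c => toClass (coker φ) (crispDesc φ (rep c))

/-- the fuzzy transition relation `δ_x` -/
def FuzzyAutomaton.δx (M : FuzzyAutomaton L X A) (x : X) : A → A → L := fun a b => M.δ a x b

open Classical in
/-- transitions extended to words -/
noncomputable def deltaWord (M : FuzzyAutomaton L X A) : List X → A → A → L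
  | [] => fun a b => if a = b then (1 : L) else ⊥
  | x :: u => rcomp (M.δx x) (deltaWord M u)

/-- the fuzzy language recognized by `M` : `L(M)(u) = σ ∘ δ_u ∘ τ` -/
noncomputable def lang (M : FuzzyAutomaton L X A) (u : List X) : L :=
  sdot (scomp M.σ (deltaWord M u)) M.τ

/-- forward simulation -/
def IsForwardSim (MA : FuzzyAutomaton L X A) (MB : FuzzyAutomaton L X B)
    (φ : A → B → L) : Prop :=
  MA.σ ≤ scomp MB.σ (inv φ) ∧
  (∀ x, rcomp (inv φ) (MA.δx x) ≤ rcomp (MB.δx x) (inv φ)) ∧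
  rscomp (inv φ) MA.τ ≤ MB.τ

/-- backward simulation -/
def IsBackwardSim (MA : FuzzyAutomaton L X A) (MB : FuzzyAutomaton L X B)
    (φ : A → B → L) : Prop :=
  scomp MA.σ φ ≤ MB.σ ∧
  (∀ x, rcomp (MA.δx x) φ ≤ rcomp φ (MB.δx x)) ∧
  MA.τ ≤ rscomp φ MB.τ

/-- forward bisimulation -/
def IsForwardBisim (MA : FuzzyAutomaton L X A) (MB : FuzzyAutomaton L X B)
    (φ : A → B → L) : Prop :=
  IsForwardSim MA MB φ ∧ IsForwardSim MB MA (inv φ)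

/-- backward bisimulation -/
def IsBackwardBisim (MA : FuzzyAutomaton L X A) (MB : FuzzyAutomaton L X B)
    (φ : A → B → L) : Prop :=
  IsBackwardSim MA MB φ ∧ IsBackwardSim MB MA (inv φ)

/-- backward-forward bisimulation -/
def IsBFBisim (MA : FuzzyAutomaton L X A) (MB : FuzzyAutomaton L X B)
    (φ : A → B → L) : Prop :=
  IsBackwardSim MA MB φ ∧ IsForwardSim MB MA (inv φ)

/-- forward-backward bisimulation -/
def IsFBBisim (MA : FuzzyAutomaton L X A) (MB : FuzzyAutomaton L X B)
    (φ : A → B → L) : Prop :=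
  IsForwardSim MA MB φ ∧ IsBackwardSim MB MA (inv φ)

/-- isomorphism of fuzzy automata -/
def IsIso (MA : FuzzyAutomaton L X A) (MB : FuzzyAutomaton L X B) (h : A → B) : Prop :=
  Function.Bijective h ∧
  (∀ (a₁ : A) (x : X) (a₂ : A), MA.δ a₁ x a₂ = MB.δ (h a₁) x (h a₂)) ∧
  (∀ a, MA.σ a = MB.σ (h a)) ∧
  (∀ a, MA.τ a = MB.τ (h a))

/-- the factor fuzzy automaton `𝓐/E` -/
noncomputable def factorAut (M : FuzzyAutomaton L X A) (E : A → A → L) :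
    FuzzyAutomaton L X (FactorSet E) where
  δ := fun c x c' => rcomp (rcomp E (M.δx x)) E (rep c) (rep c')
  σ := fun c => scomp M.σ E (rep c)
  τ := fun c => rscomp E M.τ (rep c)

/-- the natural fuzzy relation `φ(a₁, E_{a₂}) = E(a₁,a₂)` between `A` and `A/E` -/
def natRel (E : A → A → L) : A → FactorSet E → L := fun a c => c.1 a

/-- the fuzzy relation `G/E` on `A/E` -/
noncomputable def quotRel (E G : A → A → L) : FactorSet E → FactorSet E → L :=
  fun c c' => G (rep c) (rep c')

/-- the fuzzy relation `φ(a₁, E_{a₂}) = G(a₁,a₂)` between `A` and `A/E` -/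
noncomputable def quotNatRel (E G : A → A → L) : A → FactorSet E → L :=
  fun a c => G a (rep c)

/-- UFB-equivalence of fuzzy automata -/
def UFBEquiv (MA : FuzzyAutomaton L X A) (MB : FuzzyAutomaton L X B) : Prop :=
  ∃ φ : A → B → L, IsUniform φ ∧ IsForwardBisim MA MB φ

section Aux

open CompleteResiduatedLattice

lemma res_eq_one {x y : L} (h : x ≤ y) : res x y = 1 := by
  have h1 : (1 : L) ≤ res x y := by
    rw [← adjunction, one_mul]; exact h
  rw [one_eq_top] at h1 ⊢
  exact le_antisymm le_top h1

lemma le_of_res_eq_one {x y : L} (h : res x y = 1) : x ≤ y := by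
  have h1 : (1 : L) ≤ res x y := h.ge
  have := (adjunction 1 x y).mpr h1
  rwa [one_mul] at this

lemma bires_self (x : L) : bires x x = 1 := by
  simp [bires, res_eq_one le_rfl]

lemma eq_of_bires_eq_one {x y : L} (h : bires x y = 1) : x = y := by
  rw [bires, one_eq_top, inf_eq_top_iff] at h
  rw [← one_eq_top] at h
  exact le_antisymm (le_of_res_eq_one h.1) (le_of_res_eq_one h.2)

lemma mul_mono_left {x y : L} (h : x ≤ y) (c : L) : x * c ≤ y * c :=
  (adjunction x c (y * c)).mpr (h.trans ((adjunction y c (y * c)).mp le_rfl))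

lemma iSup_mul_le {ι : Sort*} {f : ι → L} {c z : L} (h : ∀ i, f i * c ≤ z) :
    (⨆ i, f i) * c ≤ z := by
  rw [adjunction]
  exact iSup_le fun i => (adjunction _ _ _).mp (h i)

lemma pff_pointwise {φ : A → B → L} (h : IsPFF φ) (a : A) (b : B) (a' : A) (b' : B) :
    φ a b' * φ a' b' * φ a' b ≤ φ a b := by
  refine le_trans ?_ (h a b)
  have h1 : φ a b' * φ a' b' ≤ rcomp φ (inv φ) a a' := by
    exact le_iSup (fun b'' => φ a b'' * inv φ b'' a') b'
  calc φ a b' * φ a' b' * φ a' b ≤ rcomp φ (inv φ) a a' * φ a' b :=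
        mul_mono_left h1 _
    _ ≤ rcomp (rcomp φ (inv φ)) φ a b :=
        le_iSup (fun a'' => rcomp φ (inv φ) a a'' * φ a'' b) a'

lemma isPFF_inv {φ : A → B → L} (h : IsPFF φ) : IsPFF (inv φ) := by
  intro b a
  refine iSup_le fun b' => iSup_mul_le fun a' => ?_
  show φ a' b * φ a' b' * φ a b' ≤ φ a b
  have := pff_pointwise h a b a' b'
  calc φ a' b * φ a' b' * φ a b' = φ a b' * φ a' b' * φ a' b := by
        rw [mul_comm (φ a' b) (φ a' b'), mul_assoc, mul_comm (φ a' b), ← mul_assoc,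
          mul_comm (φ a' b')]
    _ ≤ φ a b := this

lemma isUniform_inv {φ : A → B → L} (h : IsUniform φ) : IsUniform (inv φ) :=
  ⟨isPFF_inv h.1, h.2.2, h.2.1⟩

/-- two `1`-images of the same element have equal columns -/
lemma same_col {φ : A → B → L} (hP : IsPFF φ) {a : A} {b b' : B}
    (hb : φ a b = 1) (hb' : φ a b' = 1) (a' : A) : φ a' b = φ a' b' := by
  refine le_antisymm ?_ ?_
  · have := pff_pointwise hP a' b' a b
    rwa [hb, hb', mul_one, mul_one] at this
  · have := pff_pointwise hP a' b a b'
    rwa [hb', hb, mul_one, mul_one] at this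

lemma ker_ext {φ : A → B → L} {a₁ a₂ : A} (h : ker φ a₁ a₂ = 1) (b : B) :
    φ a₁ b = φ a₂ b := by
  rw [ker, one_eq_top, iInf_eq_top] at h
  exact eq_of_bires_eq_one (by rw [h b, one_eq_top])

lemma toClass_rep {E : A → A → L} (c : FactorSet E) : toClass E (rep c) = c :=
  Subtype.ext c.2.choose_spec

lemma crispDesc_spec [Nonempty B] {φ : A → B → L} (h : IsLFun φ) (a : A) :
    φ a (crispDesc φ a) = 1 := by
  rw [crispDesc, dif_pos (h a)]
  exact (h a).choose_spec

lemma tilde_spec [Nonempty B] {φ : A → B → L} (hφ : IsUniform φ) (a : A) (b : B)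
    (hb : φ a b = 1) : tilde φ (toClass (ker φ) a) = toClass (coker φ) b := by
  set a₀ := rep (toClass (ker φ) a) with ha₀
  have hrep : ker φ a₀ = ker φ a := (toClass (ker φ) a).2.choose_spec
  have hker : ker φ a₀ a = 1 := by
    have : ker φ a₀ a = ker φ a a := congrFun hrep a
    rw [this, ker]
    rw [one_eq_top, iInf_eq_top]
    intro b'; rw [← one_eq_top]; exact bires_self _
  have hext : ∀ b', φ a₀ b' = φ a b' := ker_ext hker
  set b₀ := crispDesc φ a₀ with hb₀
  have hφb₀ : φ a b₀ = 1 := by rw [← hext]; exact crispDesc_spec hφ.2.1 a₀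
  have hcol : ∀ a', φ a' b₀ = φ a' b := same_col hφ.1 hφb₀ hb
  show toClass (coker φ) b₀ = toClass (coker φ) b
  refine Subtype.ext ?_
  funext b₂
  show (⨅ a', bires (φ a' b₀) (φ a' b₂)) = ⨅ a', bires (φ a' b) (φ a' b₂)
  exact iInf_congr fun a' => by rw [hcol a']

lemma tilde_tilde [Nonempty A] [Nonempty B] {φ : A → B → L}
    (hφ : IsUniform φ) (a : A) :
    tilde (inv φ) (tilde φ (toClass (ker φ) a)) = toClass (ker φ) a := by
  obtain ⟨b, hb⟩ := hφ.2.1 a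
  rw [tilde_spec hφ a b hb]
  exact tilde_spec (isUniform_inv hφ) b a hb

lemma tilde_leftInverse [Nonempty A] [Nonempty B] {φ : A → B → L}
    (hφ : IsUniform φ) : Function.LeftInverse (tilde (inv φ)) (tilde φ) := by
  intro c
  have h := tilde_tilde hφ (rep c)
  have hc : toClass (ker φ) (rep c) = c := Subtype.ext c.2.choose_spec
  exact hc ▸ h

end Aux

/-- Lemma on the induced map `φ̃` -/
theorem tilde_well_defined_bijective {L A B : Type*} [CompleteResiduatedLattice L]
    [Nonempty A] [Nonempty B] (φ : A → B → L) (hφ : IsUniform φ) :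
    (∀ (a : A), ∀ ψ ∈ CR φ,
        tilde φ (toClass (ker φ) a) = toClass (coker φ) (ψ a)) ∧
    Function.Bijective (tilde φ) ∧
    Function.LeftInverse (tilde (inv φ)) (tilde φ) ∧
    Function.RightInverse (tilde (inv φ)) (tilde φ) := by
  have hli : Function.LeftInverse (tilde (inv φ)) (tilde φ) := tilde_leftInverse hφ
  have hri : Function.RightInverse (tilde (inv φ)) (tilde φ) :=
    tilde_leftInverse (isUniform_inv hφ)
  exact ⟨fun a ψ hψ => tilde_spec hφ a (ψ a) (hψ a),
    ⟨hli.injective, hri.surjective⟩, hli, hri⟩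

end FuzzyAutomataBisim
end

section
/- Let 𝓐=(A,δ^A,σ^A,τ^A) and 𝓑=(B,δ^B,σ^B,τ^B) be fuzzy automata over a complete residuated lattice 𝓛 and alphabet X, and let φ be a fuzzy relation between A and B. (A) If φ is a forward simulation or a backward simulation, then L(𝓐)(u) ≤ L(𝓑)(u) for every word u∈X*. (B) If φ is a forward bisimulation, a backward bisimulation, a backward-forward bisimulation, or a forward-backward bisimulation, then L(𝓐)=L(𝓑). -/
universe u

namespace FuzzyAutomataBisim

variable {L X A B C : Type*} [CompleteResiduatedLattice L]

section Aux

variable {L' : Type*} [CompleteResiduatedLattice L']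

lemma crl_mul_le_mul_left {a b : L'} (h : a ≤ b) (c : L') : a * c ≤ b * c := by
  have hb : b ≤ CompleteResiduatedLattice.res c (b * c) :=
    (CompleteResiduatedLattice.adjunction b c (b * c)).1 le_rfl
  exact (CompleteResiduatedLattice.adjunction a c (b * c)).2 (le_trans h hb)

lemma crl_mul_mono {a b c d : L'} (h1 : a ≤ b) (h2 : c ≤ d) : a * c ≤ b * d :=
  calc a * c ≤ b * c := crl_mul_le_mul_left h1 c
  _ = c * b := mul_comm _ _
  _ ≤ d * b := crl_mul_le_mul_left h2 b
  _ = b * d := mul_comm _ _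

lemma crl_iSup_mul {ι : Sort*} (f : ι → L') (a : L') :
    (⨆ i, f i) * a = ⨆ i, f i * a := by
  apply le_antisymm
  · refine (CompleteResiduatedLattice.adjunction _ _ _).2 (iSup_le fun i => ?_)
    exact (CompleteResiduatedLattice.adjunction _ _ _).1 (le_iSup (fun i => f i * a) i)
  · exact iSup_le fun i => crl_mul_mono (le_iSup f i) le_rfl

lemma crl_mul_iSup {ι : Sort*} (a : L') (f : ι → L') :
    a * (⨆ i, f i) = ⨆ i, a * f i := by
  rw [mul_comm, crl_iSup_mul]
  simp [mul_comm]

lemma crl_bot_mul (a : L') : (⊥ : L') * a = ⊥ :=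
  le_antisymm ((CompleteResiduatedLattice.adjunction ⊥ a ⊥).2 bot_le) bot_le

lemma crl_mul_bot (a : L') : a * (⊥ : L') = ⊥ := by
  rw [mul_comm]; exact crl_bot_mul a

variable {L X A B C D : Type*} [CompleteResiduatedLattice L]

lemma rcomp_mono {φ φ' : A → B → L} {ψ ψ' : B → C → L}
    (h1 : φ ≤ φ') (h2 : ψ ≤ ψ') : rcomp φ ψ ≤ rcomp φ' ψ' := fun a c =>
  iSup_mono fun b => crl_mul_mono (h1 a b) (h2 b c)

lemma scomp_mono {f f' : A → L} {φ φ' : A → B → L}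
    (h1 : f ≤ f') (h2 : φ ≤ φ') : scomp f φ ≤ scomp f' φ' := fun b =>
  iSup_mono fun a => crl_mul_mono (h1 a) (h2 a b)

lemma sdot_mono {f f' g g' : A → L} (h1 : f ≤ f') (h2 : g ≤ g') :
    sdot f g ≤ sdot f' g' :=
  iSup_mono fun a => crl_mul_mono (h1 a) (h2 a)

lemma rcomp_assoc (φ : A → B → L) (ψ : B → C → L) (χ : C → D → L) :
    rcomp (rcomp φ ψ) χ = rcomp φ (rcomp ψ χ) := by
  funext a d
  simp only [rcomp, crl_iSup_mul, crl_mul_iSup, mul_assoc]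
  exact iSup_comm

lemma scomp_rcomp (f : A → L) (φ : A → B → L) (ψ : B → C → L) :
    scomp (scomp f φ) ψ = scomp f (rcomp φ ψ) := by
  funext c
  simp only [scomp, rcomp, crl_iSup_mul, crl_mul_iSup, mul_assoc]
  exact iSup_comm

lemma sdot_scomp (f : A → L) (φ : A → B → L) (g : B → L) :
    sdot (scomp f φ) g = sdot f (rscomp φ g) := by
  simp only [sdot, scomp, rscomp, crl_iSup_mul, crl_mul_iSup, mul_assoc]
  exact iSup_comm

lemma rcomp_deltaNil (M : FuzzyAutomaton L X B) (φ : A → B → L) :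
    rcomp φ (deltaWord M []) = φ := by
  classical
  funext a b
  simp only [rcomp, deltaWord]
  apply le_antisymm
  · refine iSup_le fun b' => ?_
    by_cases h : b' = b
    · subst h; simp
    · simp [h, crl_mul_bot]
  · have h := le_iSup (fun b' => φ a b' * if b' = b then (1 : L) else ⊥) b
    simpa using h

lemma deltaNil_rcomp (M : FuzzyAutomaton L X A) (φ : A → B → L) :
    rcomp (deltaWord M []) φ = φ := by
  classical
  funext a b
  simp only [rcomp, deltaWord]
  apply le_antisymm
  · refine iSup_le fun a' => ?_
    by_cases h : a = a'
    · subst h; simp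
    · simp [h, crl_bot_mul]
  · have h := le_iSup (fun a' => (if a = a' then (1 : L) else ⊥) * φ a' b) a
    simpa using h

lemma fwd_lang {MA : FuzzyAutomaton L X A} {MB : FuzzyAutomaton L X B} {φ : A → B → L}
    (h : IsForwardSim MA MB φ) (u : List X) : lang MA u ≤ lang MB u := by
  obtain ⟨hσ, hδ, hτ⟩ := h
  have key : ∀ u : List X,
      rcomp (inv φ) (deltaWord MA u) ≤ rcomp (deltaWord MB u) (inv φ) := by
    intro u
    induction u with
    | nil => rw [rcomp_deltaNil, deltaNil_rcomp]
    | cons x w ih =>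
      calc rcomp (inv φ) (deltaWord MA (x :: w))
          = rcomp (rcomp (inv φ) (MA.δx x)) (deltaWord MA w) := by
            show rcomp (inv φ) (rcomp (MA.δx x) (deltaWord MA w)) = _
            rw [rcomp_assoc]
        _ ≤ rcomp (rcomp (MB.δx x) (inv φ)) (deltaWord MA w) := rcomp_mono (hδ x) le_rfl
        _ = rcomp (MB.δx x) (rcomp (inv φ) (deltaWord MA w)) := rcomp_assoc _ _ _
        _ ≤ rcomp (MB.δx x) (rcomp (deltaWord MB w) (inv φ)) := rcomp_mono le_rfl ih
        _ = rcomp (deltaWord MB (x :: w)) (inv φ) := by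
            show _ = rcomp (rcomp (MB.δx x) (deltaWord MB w)) (inv φ)
            rw [rcomp_assoc]
  calc lang MA u = sdot (scomp MA.σ (deltaWord MA u)) MA.τ := rfl
    _ ≤ sdot (scomp (scomp MB.σ (inv φ)) (deltaWord MA u)) MA.τ :=
        sdot_mono (scomp_mono hσ le_rfl) le_rfl
    _ = sdot (scomp MB.σ (rcomp (inv φ) (deltaWord MA u))) MA.τ := by rw [scomp_rcomp]
    _ ≤ sdot (scomp MB.σ (rcomp (deltaWord MB u) (inv φ))) MA.τ :=
        sdot_mono (scomp_mono le_rfl (key u)) le_rfl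
    _ = sdot (scomp (scomp MB.σ (deltaWord MB u)) (inv φ)) MA.τ := by rw [scomp_rcomp]
    _ = sdot (scomp MB.σ (deltaWord MB u)) (rscomp (inv φ) MA.τ) := sdot_scomp _ _ _
    _ ≤ sdot (scomp MB.σ (deltaWord MB u)) MB.τ := sdot_mono le_rfl hτ
    _ = lang MB u := rfl

lemma bwd_lang {MA : FuzzyAutomaton L X A} {MB : FuzzyAutomaton L X B} {φ : A → B → L}
    (h : IsBackwardSim MA MB φ) (u : List X) : lang MA u ≤ lang MB u := by
  obtain ⟨hσ, hδ, hτ⟩ := h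
  have key : ∀ u : List X,
      rcomp (deltaWord MA u) φ ≤ rcomp φ (deltaWord MB u) := by
    intro u
    induction u with
    | nil => rw [rcomp_deltaNil, deltaNil_rcomp]
    | cons x w ih =>
      calc rcomp (deltaWord MA (x :: w)) φ
          = rcomp (MA.δx x) (rcomp (deltaWord MA w) φ) := by
            show rcomp (rcomp (MA.δx x) (deltaWord MA w)) φ = _
            rw [rcomp_assoc]
        _ ≤ rcomp (MA.δx x) (rcomp φ (deltaWord MB w)) := rcomp_mono le_rfl ih
        _ = rcomp (rcomp (MA.δx x) φ) (deltaWord MB w) := (rcomp_assoc _ _ _).symm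
        _ ≤ rcomp (rcomp φ (MB.δx x)) (deltaWord MB w) := rcomp_mono (hδ x) le_rfl
        _ = rcomp φ (deltaWord MB (x :: w)) := by
            show _ = rcomp φ (rcomp (MB.δx x) (deltaWord MB w))
            rw [rcomp_assoc]
  calc lang MA u = sdot (scomp MA.σ (deltaWord MA u)) MA.τ := rfl
    _ ≤ sdot (scomp MA.σ (deltaWord MA u)) (rscomp φ MB.τ) := sdot_mono le_rfl hτ
    _ = sdot (scomp (scomp MA.σ (deltaWord MA u)) φ) MB.τ := (sdot_scomp _ _ _).symm
    _ = sdot (scomp MA.σ (rcomp (deltaWord MA u) φ)) MB.τ := by rw [scomp_rcomp]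
    _ ≤ sdot (scomp MA.σ (rcomp φ (deltaWord MB u))) MB.τ :=
        sdot_mono (scomp_mono le_rfl (key u)) le_rfl
    _ = sdot (scomp (scomp MA.σ φ) (deltaWord MB u)) MB.τ := by rw [scomp_rcomp]
    _ ≤ sdot (scomp MB.σ (deltaWord MB u)) MB.τ := sdot_mono (scomp_mono hσ le_rfl) le_rfl
    _ = lang MB u := rfl

end Aux

/-- simulations and bisimulations vs. recognized languages -/
theorem sim_lang_le {L X A B : Type*} [CompleteResiduatedLattice L]
    [Nonempty A] [Nonempty B]
    (MA : FuzzyAutomaton L X A) (MB : FuzzyAutomaton L X B) (φ : A → B → L) :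
    ((IsForwardSim MA MB φ ∨ IsBackwardSim MA MB φ) →
        ∀ u : List X, lang MA u ≤ lang MB u) ∧
    ((IsForwardBisim MA MB φ ∨ IsBackwardBisim MA MB φ ∨
        IsBFBisim MA MB φ ∨ IsFBBisim MA MB φ) →
        lang MA = lang MB) := by
  constructor
  · rintro (h | h) u
    · exact fwd_lang h u
    · exact bwd_lang h u
  · rintro (⟨h1, h2⟩ | ⟨h1, h2⟩ | ⟨h1, h2⟩ | ⟨h1, h2⟩) <;> funext u
    · exact le_antisymm (fwd_lang h1 u) (fwd_lang h2 u)
    · exact le_antisymm (bwd_lang h1 u) (bwd_lang h2 u)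
    · exact le_antisymm (bwd_lang h1 u) (fwd_lang h2 u)
    · exact le_antisymm (fwd_lang h1 u) (bwd_lang h2 u)

end FuzzyAutomataBisim
end

section
/- Let 𝓐=(A,δ^A,σ^A,τ^A) and 𝓑=(B,δ^B,σ^B,τ^B) be fuzzy automata over a complete residuated lattice 𝓛 and alphabet X, and let {φ_i}_{i∈I} be a non-empty family of forward bisimulations between 𝓐 and 𝓑. Then the pointwise join ⋁_{i∈I} φ_i is a forward bisimulation between 𝓐 and 𝓑. -/
universe u

namespace FuzzyAutomataBisim

variable {L X A B C : Type*} [CompleteResiduatedLattice L]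

open CompleteResiduatedLattice in
lemma crl_mul_le_mul_right {x y : L} (h : x ≤ y) (z : L) : x * z ≤ y * z :=
  (adjunction x z (y * z)).mpr (h.trans ((adjunction y z (y * z)).mp le_rfl))

open CompleteResiduatedLattice in
lemma crl_mul_le_mul_left_s6 {x y : L} (h : x ≤ y) (z : L) : z * x ≤ z * y := by
  rw [mul_comm z x, mul_comm z y]; exact crl_mul_le_mul_right h z

open CompleteResiduatedLattice in
lemma crl_iSup_mul_s6 {ι : Type*} (f : ι → L) (x : L) :
    (⨆ i, f i) * x = ⨆ i, f i * x := by
  refine le_antisymm ?_ (iSup_le fun i => crl_mul_le_mul_right (le_iSup f i) x)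
  exact (adjunction _ _ _).mpr
    (iSup_le fun i => (adjunction _ _ _).mp (le_iSup (fun i => f i * x) i))

open CompleteResiduatedLattice in
lemma crl_mul_iSup_s6 {ι : Type*} (f : ι → L) (x : L) :
    x * (⨆ i, f i) = ⨆ i, x * f i := by
  rw [mul_comm, crl_iSup_mul_s6]; simp [mul_comm]

lemma iSup_forwardSim {L X A B I : Type*} [CompleteResiduatedLattice L] [Nonempty I]
    (MA : FuzzyAutomaton L X A) (MB : FuzzyAutomaton L X B)
    (φ : I → A → B → L) (h : ∀ i, IsForwardSim MA MB (φ i)) :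
    IsForwardSim MA MB (fun a b => ⨆ i, φ i a b) := by
  refine ⟨?_, ?_, ?_⟩
  · intro a
    obtain ⟨i⟩ := ‹Nonempty I›
    refine le_trans ((h i).1 a) (iSup_mono fun b => ?_)
    exact crl_mul_le_mul_left_s6 (le_iSup (fun j => φ j a b) i) _
  · intro x b a'
    simp only [rcomp, inv, crl_iSup_mul_s6]
    rw [iSup_comm]
    refine iSup_le fun i => ?_
    refine le_trans ((h i).2.1 x b a') (iSup_mono fun b' => ?_)
    exact crl_mul_le_mul_left_s6 (le_iSup (fun j => φ j a' b') i) _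
  · intro b
    simp only [rscomp, inv, crl_iSup_mul_s6]
    rw [iSup_comm]
    exact iSup_le fun i => (h i).2.2 b

/-- join of a non-empty family of forward bisimulations -/
theorem iSup_forwardBisim {L X A B I : Type*} [CompleteResiduatedLattice L]
    [Nonempty A] [Nonempty B] [Nonempty I]
    (MA : FuzzyAutomaton L X A) (MB : FuzzyAutomaton L X B)
    (φ : I → A → B → L) (h : ∀ i, IsForwardBisim MA MB (φ i)) :
    IsForwardBisim MA MB (fun a b => ⨆ i, φ i a b) := by
  exact ⟨iSup_forwardSim MA MB φ fun i => (h i).1,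
    iSup_forwardSim MB MA (fun i => inv (φ i)) fun i => (h i).2⟩

end FuzzyAutomataBisim
end
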